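/- arXiv:1303.1340 — 2 statements merged into one kernel-verified Lean document; each statement's English description precedes it below -/
import Mathlib

section
/- For v = (x,y,z) ∈ ℝ³ set m(v) = max(x,y,z) + max(−x,−y,−z), so that m(v) ≥ 0, and for v = (x,x,z) with x ≥ z one has m(v) = x − z. Let v₁, …, v_k ∈ ℝ³ be finitely many vectors, each lying in X, which satisfy the balancing condition v₁ + ⋯ + v_k = 0. Then the three sums Σ_{j : v_j ∈ σ₁} m(v_j), Σ_{j : v_j ∈ σ₂} m(v_j), and Σ_{j : v_j ∈ σ₃} m(v_j) are all equal. (Vectors lying on L = σ₁ ∩ σ₂ ∩ σ₃ satisfy m(v) = 0, so the possible overlap of the three index sets is harmless.) -/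
/-- The face `σ₁ = {x = y ≥ z}` of the tropical plane. -/
def sigma1 : Set (ℝ × ℝ × ℝ) := {p | p.1 = p.2.1 ∧ p.2.2 ≤ p.1}

/-- The face `σ₂ = {x = z ≥ y}` of the tropical plane. -/
def sigma2 : Set (ℝ × ℝ × ℝ) := {p | p.1 = p.2.2 ∧ p.2.1 ≤ p.1}

/-- The face `σ₃ = {y = z ≥ x}` of the tropical plane. -/
def sigma3 : Set (ℝ × ℝ × ℝ) := {p | p.2.1 = p.2.2 ∧ p.1 ≤ p.2.1}

/-- The tropical plane `X = σ₁ ∪ σ₂ ∪ σ₃`. -/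
def tropX : Set (ℝ × ℝ × ℝ) := sigma1 ∪ sigma2 ∪ sigma3

/-- `m(v) = max(x,y,z) + max(−x,−y,−z)`, the local intersection multiplicity of the
direction `v` with the line `L`. -/
def mMult (v : ℝ × ℝ × ℝ) : ℝ :=
  max v.1 (max v.2.1 v.2.2) + max (-v.1) (max (-v.2.1) (-v.2.2))

lemma mMult_sigma1 {p : ℝ × ℝ × ℝ} (h : p ∈ sigma1) : mMult p = p.1 - p.2.2 := by
  obtain ⟨h1, h2⟩ := h
  have e1 : max p.1 (max p.2.1 p.2.2) = p.1 := by
    rw [max_eq_left] <;> simp [← h1, h2, le_max_iff]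
  have e2 : max (-p.1) (max (-p.2.1) (-p.2.2)) = -p.2.2 := by
    rw [max_eq_right, max_eq_right] <;> simp [← h1, h2]
  rw [mMult, e1, e2]; ring

lemma mMult_sigma2 {p : ℝ × ℝ × ℝ} (h : p ∈ sigma2) : mMult p = p.1 - p.2.1 := by
  obtain ⟨h1, h2⟩ := h
  have e1 : max p.1 (max p.2.1 p.2.2) = p.1 :=
    max_eq_left (max_le h2 (le_of_eq h1.symm))
  have e2 : max (-p.1) (max (-p.2.1) (-p.2.2)) = -p.2.1 := by
    rw [max_eq_right, max_eq_left] <;> simp [← h1, h2]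
  rw [mMult, e1, e2]; ring

lemma mMult_sigma3 {p : ℝ × ℝ × ℝ} (h : p ∈ sigma3) : mMult p = p.2.1 - p.1 := by
  obtain ⟨h1, h2⟩ := h
  have e1 : max p.1 (max p.2.1 p.2.2) = p.2.1 := by
    rw [max_eq_right, max_eq_left] <;> simp [← h1, h2]
  have e2 : max (-p.1) (max (-p.2.1) (-p.2.2)) = -p.1 :=
    max_eq_left (max_le (by simp [h2]) (by simp [← h1, h2]))
  rw [mMult, e1, e2]; ring

open Classical in
/-- If `v₁, …, v_k` are vectors of `ℝ³` lying in the tropical plane `X` that satisfy the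
balancing condition `v₁ + ⋯ + v_k = 0`, then the three sums `Σ_{vⱼ ∈ σᵢ} m(vⱼ)`,
for `i = 1, 2, 3`, are all equal. -/
theorem stmt_2 (k : ℕ) (v : Fin k → ℝ × ℝ × ℝ)
    (hX : ∀ i, v i ∈ tropX) (hbal : ∑ i, v i = 0) :
    (∑ i ∈ Finset.univ.filter fun i => v i ∈ sigma1, mMult (v i)) =
      (∑ i ∈ Finset.univ.filter fun i => v i ∈ sigma2, mMult (v i)) ∧
    (∑ i ∈ Finset.univ.filter fun i => v i ∈ sigma2, mMult (v i)) =
      (∑ i ∈ Finset.univ.filter fun i => v i ∈ sigma3, mMult (v i)) := by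
  have hy : ∑ i, (v i).2.1 = 0 := by
    have := congrArg (fun p : ℝ × ℝ × ℝ => p.2.1) hbal
    simpa [Prod.snd_sum, Prod.fst_sum] using this
  have hx : ∑ i, (v i).1 = 0 := by
    have := congrArg (fun p : ℝ × ℝ × ℝ => p.1) hbal
    simpa [Prod.fst_sum] using this
  have hz : ∑ i, (v i).2.2 = 0 := by
    have := congrArg (fun p : ℝ × ℝ × ℝ => p.2.2) hbal
    simpa [Prod.snd_sum] using this
  constructor
  · have key : ∀ i, (if v i ∈ sigma1 then mMult (v i) else 0)
        - (if v i ∈ sigma2 then mMult (v i) else 0) = (v i).2.1 - (v i).2.2 := by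
      intro i
      split_ifs with h1 h2 h2
      · rw [mMult_sigma1 h1]
        obtain ⟨a1, _⟩ := h1; obtain ⟨a2, _⟩ := h2; linarith
      · rw [mMult_sigma1 h1]; obtain ⟨a1, _⟩ := h1; linarith
      · rw [mMult_sigma2 h2]; obtain ⟨a2, _⟩ := h2; linarith
      · rcases hX i with (h | h) | h
        · exact absurd h h1
        · exact absurd h h2
        · obtain ⟨a3, _⟩ := h; linarith
    have := Finset.sum_congr (rfl : (Finset.univ : Finset (Fin k)) = Finset.univ)
      (fun i _ => key i)
    rw [Finset.sum_sub_distrib, Finset.sum_sub_distrib] at this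
    rw [Finset.sum_filter, Finset.sum_filter]
    rw [hy, hz] at this
    linarith
  · have key : ∀ i, (if v i ∈ sigma2 then mMult (v i) else 0)
        - (if v i ∈ sigma3 then mMult (v i) else 0) = (v i).1 - (v i).2.1 := by
      intro i
      split_ifs with h2 h3 h3
      · rw [mMult_sigma2 h2]
        obtain ⟨a2, _⟩ := h2; obtain ⟨a3, _⟩ := h3; linarith
      · rw [mMult_sigma2 h2]; ring
      · rw [mMult_sigma3 h3]; obtain ⟨a3, _⟩ := h3; linarith
      · rcases hX i with (h | h) | h
        · obtain ⟨a1, _⟩ := h; linarith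
        · exact absurd h h2
        · exact absurd h h3
    have := Finset.sum_congr (rfl : (Finset.univ : Finset (Fin k)) = Finset.univ)
      (fun i _ => key i)
    rw [Finset.sum_sub_distrib, Finset.sum_sub_distrib] at this
    rw [Finset.sum_filter, Finset.sum_filter]
    rw [hx, hy] at this
    linarith
end

section
/- Let l₁, l₃, w be positive integers and set N = w·l₃. The set of polynomials Q ∈ ℂ[z] such that (i) Q has degree l₁ − 1, (ii) Q is squarefree and every complex root r of Q satisfies r^N = 1 and r ≠ 1, and (iii) (−1)^{l₃} · Q(0)^{l₃} = 1, is finite of cardinality l₃ · C(N − 1, l₁ − 1), where C(·,·) denotes the binomial coefficient. -/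
/-!
Over an algebraically closed field a squarefree polynomial is determined by its set of roots
together with its value at one point where it does not vanish. Hence `Q ↦ (roots of Q, -Q(0))`
is a bijection from the set onto pairs `(S, ζ)`, where `S` is an `(l₁ - 1)`-subset of the
`N`-th roots of unity other than `1` and `ζ` is an `l₃`-th root of unity: the normalization
`(-1)^{l₃} Q(0)^{l₃} = 1` says exactly that `(-Q(0))^{l₃} = 1`.
-/

def polySet (l₁ l₃ w : ℕ) : Set (Polynomial ℂ) :=
  {Q | Q ≠ 0 ∧ Q.natDegree = l₁ - 1 ∧ Squarefree Q ∧
    (∀ r : ℂ, Q.IsRoot r → r ^ (w * l₃) = 1 ∧ r ≠ 1) ∧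
    (-1 : ℂ) ^ l₃ * (Q.eval 0) ^ l₃ = 1}

open Polynomial

namespace Polynomial

variable {K : Type*} [Field K]

theorem squarefree_C_mul_prod_X_sub_C {c : K} (hc : c ≠ 0) (S : Finset K) :
    Squarefree (C c * ∏ r ∈ S, (X - C r)) :=
  (associated_unit_mul_left _ _ (isUnit_C.2 hc.isUnit)).squarefree_iff.2
    (separable_prod_X_sub_C_iff'.2 fun _ _ _ _ h => h).squarefree

theorem eval_prod_X_sub_C_ne_zero {S : Finset K} {a : K} (ha : a ∉ S) :
    (∏ r ∈ S, (X - C r)).eval a ≠ 0 := by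
  rw [eval_prod, Finset.prod_ne_zero_iff]
  intro r hr
  rw [eval_sub, eval_X, eval_C, sub_ne_zero]
  rintro rfl
  exact ha hr

theorem nodup_roots_of_squarefree [PerfectField K] {p : K[X]} (hp : Squarefree p) :
    p.roots.Nodup :=
  nodup_roots (PerfectField.separable_iff_squarefree.2 hp)

variable [IsAlgClosed K]

theorem eq_of_roots_eq_of_eval_eq {p q : K[X]} (hroots : p.roots = q.roots) {a : K}
    (heval : p.eval a = q.eval a) (hp : p.eval a ≠ 0) : p = q := by
  have hp' := C_leadingCoeff_mul_prod_multiset_X_sub_C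
    (IsAlgClosed.card_roots_eq_natDegree (p := p))
  have hq' := C_leadingCoeff_mul_prod_multiset_X_sub_C
    (IsAlgClosed.card_roots_eq_natDegree (p := q))
  rw [← hroots] at hq'
  set P := (p.roots.map fun r => X - C r).prod
  have hP : P.eval a ≠ 0 := by
    intro h; apply hp; rw [← hp', eval_mul, h, mul_zero]
  have hlc : p.leadingCoeff = q.leadingCoeff := by
    rw [← hp', ← hq', eval_mul, eval_mul, eval_C, eval_C] at heval
    exact mul_right_cancel₀ hP heval
  rw [← hp', ← hq', hlc]

variable [DecidableEq K]

theorem card_roots_toFinset_of_squarefree {p : K[X]} (hp : Squarefree p) :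
    p.roots.toFinset.card = p.natDegree := by
  rw [Multiset.toFinset_card_of_nodup (nodup_roots_of_squarefree hp),
    IsAlgClosed.card_roots_eq_natDegree]

theorem bijOn_roots_toFinset_neg_eval_zero {R Z : Finset K} (hR : 0 ∉ R) (hZ : 0 ∉ Z)
    (d : ℕ) :
    Set.BijOn (fun Q : K[X] => (Q.roots.toFinset, -Q.eval 0))
      {Q | Q.natDegree = d ∧ Squarefree Q ∧ (∀ r, Q.IsRoot r → r ∈ R) ∧ -Q.eval 0 ∈ Z}
      ((R.powersetCard d ×ˢ Z : Finset _) : Set (Finset K × K)) := by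
  refine ⟨?mapsTo, ?injOn, ?surjOn⟩
  case mapsTo =>
    rintro Q ⟨hdeg, hsf, hroots, hQ0⟩
    refine Finset.mem_product.2 ⟨Finset.mem_powersetCard.2 ⟨?_, ?_⟩, hQ0⟩
    · exact fun r hr => hroots r (isRoot_of_mem_roots (Multiset.mem_toFinset.1 hr))
    · rw [card_roots_toFinset_of_squarefree hsf, hdeg]
  case injOn =>
    rintro Q ⟨-, hsf, -, hQ0⟩ Q' ⟨-, hsf', -, -⟩ h
    obtain ⟨hroots, heval⟩ := Prod.ext_iff.1 h
    refine eq_of_roots_eq_of_eval_eq ?_ (neg_inj.1 heval) fun h0 => hZ (by simpa [h0] using hQ0)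
    exact (nodup_roots_of_squarefree hsf).toFinset_inj (nodup_roots_of_squarefree hsf') hroots
  case surjOn =>
    rintro ⟨S, ζ⟩ hSζ
    obtain ⟨hS, hζ⟩ := Finset.mem_product.1 hSζ
    obtain ⟨hSR, hcard⟩ := Finset.mem_powersetCard.1 hS
    set P : K[X] := ∏ r ∈ S, (X - C r)
    have hP0 : P.eval 0 ≠ 0 := eval_prod_X_sub_C_ne_zero fun h => hR (hSR h)
    have hc : -ζ / P.eval 0 ≠ 0 := div_ne_zero (neg_ne_zero.2 fun h => hZ (h ▸ hζ)) hP0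
    have hroots : (C (-ζ / P.eval 0) * P).roots = S.val := by
      rw [roots_C_mul _ hc, roots_prod_X_sub_C]
    have heval : -(C (-ζ / P.eval 0) * P).eval 0 = ζ := by
      rw [eval_mul, eval_C, div_mul_cancel₀ _ hP0, neg_neg]
    refine ⟨C (-ζ / P.eval 0) * P,
      ⟨?_, squarefree_C_mul_prod_X_sub_C hc S, ?_, by rwa [heval]⟩, ?_⟩
    · rw [natDegree_C_mul hc, natDegree_finsetProd_X_sub_C_eq_card, hcard]
    · intro r hr
      have hr' := (mem_roots (squarefree_C_mul_prod_X_sub_C hc S).ne_zero).2 hr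
      rw [hroots] at hr'
      exact hSR hr'
    · simp only [hroots, Finset.val_toFinset, heval]

end Polynomial

theorem polySet_eq {l₁ l₃ w : ℕ} (hl₃ : 0 < l₃) (hw : 0 < w) :
    polySet l₁ l₃ w = {Q | Q.natDegree = l₁ - 1 ∧ Squarefree Q ∧
      (∀ r, Q.IsRoot r → r ∈ (nthRootsFinset (w * l₃) (1 : ℂ)).erase 1) ∧
      -Q.eval 0 ∈ nthRootsFinset l₃ (1 : ℂ)} := by
  ext Q
  simp only [polySet, Set.mem_ofPred_eq, Finset.mem_erase,
    mem_nthRootsFinset (Nat.mul_pos hw hl₃), mem_nthRootsFinset hl₃]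
  constructor
  · rintro ⟨-, hdeg, hsf, hroots, hnorm⟩
    exact ⟨hdeg, hsf, fun r hr => (hroots r hr).symm, by rwa [neg_pow]⟩
  · rintro ⟨hdeg, hsf, hroots, hnorm⟩
    exact ⟨hsf.ne_zero, hdeg, hsf, fun r hr => (hroots r hr).symm, by rwa [neg_pow] at hnorm⟩

theorem stmt_3_general (l₁ l₃ w : ℕ) (hl₃ : 0 < l₃) (hw : 0 < w) :
    (polySet l₁ l₃ w).Finite ∧
    (polySet l₁ l₃ w).ncard = l₃ * (w * l₃ - 1).choose (l₁ - 1) := by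
  have hN : 0 < w * l₃ := Nat.mul_pos hw hl₃
  have hbij := bijOn_roots_toFinset_neg_eval_zero
    (R := (nthRootsFinset (w * l₃) (1 : ℂ)).erase 1) (Z := nthRootsFinset l₃ (1 : ℂ))
    (fun h => ne_zero_of_mem_nthRootsFinset one_ne_zero (Finset.mem_of_mem_erase h) rfl)
    (fun h => ne_zero_of_mem_nthRootsFinset one_ne_zero h rfl) (l₁ - 1)
  rw [polySet_eq hl₃ hw]
  refine ⟨hbij.finite_iff_finite.2 (Finset.finite_toSet _), ?_⟩
  rw [hbij.ncard_eq, Set.ncard_coe_finset, Finset.card_product, Finset.card_powersetCard,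
    Finset.card_erase_of_mem (one_mem_nthRootsFinset hN),
    (Complex.isPrimitiveRoot_exp _ hN.ne').card_nthRootsFinset,
    (Complex.isPrimitiveRoot_exp _ hl₃.ne').card_nthRootsFinset, mul_comm]

/-- Let `l₁, l₃, w` be positive integers and `N = w·l₃`. The set of polynomials
`Q ∈ ℂ[z]` of degree `l₁ − 1`, squarefree with all roots `N`-th roots of unity
distinct from `1`, and with `(−1)^{l₃} Q(0)^{l₃} = 1`, is finite of cardinality
`l₃ · C(N − 1, l₁ − 1)`. -/
theorem stmt_3 (l₁ l₃ w : ℕ) (hl₁ : 0 < l₁) (hl₃ : 0 < l₃) (hw : 0 < w) :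
    (polySet l₁ l₃ w).Finite ∧
    (polySet l₁ l₃ w).ncard = l₃ * (w * l₃ - 1).choose (l₁ - 1) :=
  stmt_3_general l₁ l₃ w hl₃ hw
end
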